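/- arXiv:1707.09305 — 3 statements merged into one kernel-verified Lean document; each statement's English description precedes it below -/
import Mathlib

section
/- Let a ∈ 𝕋_min^{d+1} with supp(a) = {0} ⊔ J for J nonempty. The min-tropical halfspace S = {x ∈ 𝕋_min^{d+1} : x₀ + a₀ ≤ min(x_j + a_j : j ∈ J)} is generated (as a min-tropical cone) by the d+1 points g⁽⁰⁾,…,g⁽ᵈ⁾, where g⁽⁰⁾ = e⁽⁰⁾ (the 0-th tropical unit vector), g⁽ⁱ⁾ for i ∈ J has 0-th coordinate 0, i-th coordinate a₀ − a_i, and ∞ elsewhere, and g⁽ⁱ⁾ = e⁽ⁱ⁾ for i ∉ J ∪ {0}. -/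
def IsMinTropCone {d : ℕ} (C : Set (Fin (d + 1) → WithTop ℝ)) : Prop :=
  C.Nonempty ∧ ∀ (lam mu : WithTop ℝ), ∀ x ∈ C, ∀ y ∈ C,
    (fun k => min (lam + x k) (mu + y k)) ∈ C

def IsSmallestMinTropConeContaining {d : ℕ} (C G : Set (Fin (d + 1) → WithTop ℝ)) : Prop :=
  IsMinTropCone C ∧ G ⊆ C ∧ ∀ D, IsMinTropCone D → G ⊆ D → C ⊆ D

/-!
The halfspace is cut out by the inequalities `x₀ + a₀ ≤ x_j + a_j`, each preserved by tropical
combinations, so it is a cone. Conversely a point `x` of it is the tropical combination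
`min_i (λ_i + g⁽ⁱ⁾)` with `λ_i = x_i + a_i - a₀` for `i ∈ J` and `λ_i = x_i` otherwise: the `i`-th
term reproduces `x_i` in coordinate `i`, and the halfspace inequality bounds its `0`-th coordinate
from below by `x₀`.
-/

open Finset

lemma IsMinTropCone.inf'_add_mem {d : ℕ} {D : Set (Fin (d + 1) → WithTop ℝ)}
    (hD : IsMinTropCone D) {ι : Type*} {s : Finset ι} (hs : s.Nonempty) (lam : ι → WithTop ℝ)
    {p : ι → Fin (d + 1) → WithTop ℝ} (hp : ∀ i ∈ s, p i ∈ D) :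
    (fun k => s.inf' hs fun i => lam i + p i k) ∈ D := by
  induction hs using Finset.Nonempty.cons_induction with
  | singleton i =>
    simpa using hD.2 (lam i) (lam i) (p i) (hp i (by simp)) (p i) (hp i (by simp))
  | cons i s hi hs ih =>
    have hs_mem := ih fun j hj => hp j (by simp [hj])
    simpa [inf'_cons hs] using hD.2 (lam i) 0 (p i) (hp i (by simp)) _ hs_mem

lemma IsMinTropCone.mem_of_forall_le_of_exists_le {d : ℕ} {D : Set (Fin (d + 1) → WithTop ℝ)}
    (hD : IsMinTropCone D) {ι : Type*} [Fintype ι] [Nonempty ι] (lam : ι → WithTop ℝ)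
    {p : ι → Fin (d + 1) → WithTop ℝ} (hp : ∀ i, p i ∈ D) {x : Fin (d + 1) → WithTop ℝ}
    (hle : ∀ i k, x k ≤ lam i + p i k) (hex : ∀ k, ∃ i, lam i + p i k ≤ x k) : x ∈ D := by
  convert hD.inf'_add_mem univ_nonempty lam fun i _ => hp i using 1
  funext k
  obtain ⟨i, hi⟩ := hex k
  exact le_antisymm (le_inf' _ _ fun i _ => hle i k) ((inf'_le _ (mem_univ i)).trans hi)

lemma WithTop.coe_untopD_sub_untopD_add {x y : WithTop ℝ} (hx : x ≠ ⊤) (hy : y ≠ ⊤) :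
    ((x.untopD 0 - y.untopD 0 : ℝ) : WithTop ℝ) + y = x := by
  lift x to ℝ using hx
  lift y to ℝ using hy
  simp only [WithTop.untopD_coe, ← WithTop.coe_add, sub_add_cancel]

section Halfspace

variable {d : ℕ} (a : Fin (d + 1) → WithTop ℝ) (J : Finset (Fin (d + 1)))

def minTropHalfspace (hJ : J.Nonempty) : Set (Fin (d + 1) → WithTop ℝ) :=
  {x | x 0 + a 0 ≤ J.inf' hJ fun j => x j + a j}

def minTropHalfspaceGenerator (i : Fin (d + 1)) : Fin (d + 1) → WithTop ℝ :=
  if i ∈ J then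
    fun k => if k = 0 then (0 : WithTop ℝ)
             else if k = i then ((WithTop.untopD 0 (a 0) - WithTop.untopD 0 (a i) : ℝ) : WithTop ℝ)
             else ⊤
  else fun k => if k = i then (0 : WithTop ℝ) else ⊤

variable {a J}

lemma mem_minTropHalfspace_iff {hJ : J.Nonempty} {x : Fin (d + 1) → WithTop ℝ} :
    x ∈ minTropHalfspace a J hJ ↔ ∀ j ∈ J, x 0 + a 0 ≤ x j + a j :=
  le_inf'_iff hJ fun j => x j + a j

lemma isMinTropCone_minTropHalfspace (hJ : J.Nonempty) :
    IsMinTropCone (minTropHalfspace a J hJ) := by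
  refine ⟨⟨fun _ => ⊤, by simp [mem_minTropHalfspace_iff]⟩, fun lam mu x hx y hy => ?_⟩
  simp only [mem_minTropHalfspace_iff] at hx hy ⊢
  intro j hj
  rw [← min_add_add_right, ← min_add_add_right, add_assoc, add_assoc, add_assoc, add_assoc]
  exact min_le_min (add_le_add_right (hx j hj) _) (add_le_add_right (hy j hj) _)

variable (ha0 : a 0 ≠ ⊤) (haJ : ∀ j ∈ J, a j ≠ ⊤)
include ha0 haJ

lemma minTropHalfspaceGenerator_mem (hJ : J.Nonempty) (i : Fin (d + 1)) :
    minTropHalfspaceGenerator a J i ∈ minTropHalfspace a J hJ := by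
  rw [mem_minTropHalfspace_iff]
  intro j hj
  by_cases hi : i ∈ J
  · simp only [minTropHalfspaceGenerator, hi, if_true]
    split_ifs with hj0 hji
    · simp [hj0]
    · rw [hji, WithTop.coe_untopD_sub_untopD_add ha0 (haJ i hi), zero_add]
    · simp
  · simp [minTropHalfspaceGenerator, hi, ne_of_mem_of_not_mem hj hi]

lemma minTropHalfspace_subset (hJ : J.Nonempty) {D : Set (Fin (d + 1) → WithTop ℝ)}
    (hD : IsMinTropCone D) (hG : ∀ i, minTropHalfspaceGenerator a J i ∈ D) :
    minTropHalfspace a J hJ ⊆ D := by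
  intro x hx
  rw [mem_minTropHalfspace_iff] at hx
  let lam i : WithTop ℝ :=
    if i ∈ J then x i + ((WithTop.untopD 0 (a i) - WithTop.untopD 0 (a 0) : ℝ) : WithTop ℝ)
    else x i
  refine hD.mem_of_forall_le_of_exists_le lam hG (fun i k => ?_) (fun k => ⟨k, ?_⟩)
  · by_cases hi : i ∈ J
    · simp only [lam, minTropHalfspaceGenerator, hi, if_true]
      split_ifs with hk0 hki
      · rw [hk0, add_zero, ← WithTop.add_le_add_iff_right ha0, add_assoc,
          WithTop.coe_untopD_sub_untopD_add (haJ i hi) ha0]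
        exact hx i hi
      · rw [hki, add_assoc, ← WithTop.coe_add]
        simp
      · simp
    · simp only [lam, minTropHalfspaceGenerator, hi, if_false]
      split_ifs with hki
      · simp [hki]
      · simp
  · by_cases hk : k ∈ J
    · simp only [lam, minTropHalfspaceGenerator, hk, if_true]
      split_ifs with hk0
      · simp [hk0]
      · rw [add_assoc, ← WithTop.coe_add]
        simp
    · simp [lam, minTropHalfspaceGenerator, hk]

end Halfspace

theorem minTropHalfspace_generators_general {d : ℕ} (a : Fin (d + 1) → WithTop ℝ)
    (J : Finset (Fin (d + 1))) (hJ : J.Nonempty)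
    (hsupp : ∀ i, a i ≠ ⊤ ↔ (i = 0 ∨ i ∈ J)) :
    IsSmallestMinTropConeContaining
      {x : Fin (d + 1) → WithTop ℝ | x 0 + a 0 ≤ J.inf' hJ (fun j => x j + a j)}
      (Set.range (fun i : Fin (d + 1) =>
        if i ∈ J then
          (fun k => if k = 0 then (0 : WithTop ℝ)
                    else if k = i then ((WithTop.untopD 0 (a 0) - WithTop.untopD 0 (a i) : ℝ) : WithTop ℝ)
                    else ⊤)
        else (fun k => if k = i then (0 : WithTop ℝ) else ⊤))) := by
  have ha0 : a 0 ≠ ⊤ := (hsupp 0).2 (Or.inl rfl)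
  have haJ : ∀ j ∈ J, a j ≠ ⊤ := fun j hj => (hsupp j).2 (Or.inr hj)
  change IsSmallestMinTropConeContaining (minTropHalfspace a J hJ)
    (Set.range (minTropHalfspaceGenerator a J))
  refine ⟨isMinTropCone_minTropHalfspace hJ, ?_, fun D hD hGD => ?_⟩
  · rintro _ ⟨i, rfl⟩
    exact minTropHalfspaceGenerator_mem ha0 haJ hJ i
  · exact minTropHalfspace_subset ha0 haJ hJ hD fun i => hGD ⟨i, rfl⟩

/-- The min-tropical halfspace `{x : x₀ + a₀ ≤ min (x_j + a_j : j ∈ J)}`, where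
`supp a = {0} ⊔ J`, is generated as a min-tropical cone by the `d+1` points
`g⁽⁰⁾, …, g⁽ᵈ⁾`: `g⁽ⁱ⁾` for `i ∈ J` has 0-th coordinate `0`, `i`-th coordinate
`a₀ - a_i` and `∞` elsewhere, while `g⁽ⁱ⁾ = e⁽ⁱ⁾` (the `i`-th tropical unit vector)
for `i ∉ J`. -/
theorem minTropHalfspace_generators {d : ℕ} (a : Fin (d + 1) → WithTop ℝ)
    (J : Finset (Fin (d + 1))) (hJ : J.Nonempty) (h0J : (0 : Fin (d + 1)) ∉ J)
    (hsupp : ∀ i, a i ≠ ⊤ ↔ (i = 0 ∨ i ∈ J)) :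
    IsSmallestMinTropConeContaining
      {x : Fin (d + 1) → WithTop ℝ | x 0 + a 0 ≤ J.inf' hJ (fun j => x j + a j)}
      (Set.range (fun i : Fin (d + 1) =>
        if i ∈ J then
          (fun k => if k = 0 then (0 : WithTop ℝ)
                    else if k = i then ((WithTop.untopD 0 (a 0) - WithTop.untopD 0 (a i) : ℝ) : WithTop ℝ)
                    else ⊤)
        else (fun k => if k = i then (0 : WithTop ℝ) else ⊤))) :=
  minTropHalfspace_generators_general a J hJ hsupp
end

section
/- Let G ⊆ 𝕋_max^{d+1} be a finite set with 0 ∈ supp(g) for every g ∈ G. Then the set 𝒪(G) = ⋃_{g∈G} {x ∈ 𝕋_max^{d+1} : x₀ − g₀ ≤ min(x_j − g_j : j ∈ supp(g)\{0})} is a max-tropical cone; in fact it is the max-tropical cone generated by G together with the negated tropical unit vectors −e⁽¹⁾,…,−e⁽ᵈ⁾. -/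
/-!
A point `x` lies in the sector of `g` exactly when the translate `(x₀ - g₀) + g` lies below `x`
and agrees with it in coordinate `0`. This property survives a tropical combination
`max (λ + x) (μ + y)` as long as the summand that is larger in coordinate `0` comes from the
sector, which makes the union of the sectors a cone. Conversely such an `x` is the tropical
combination `max ((x₀ - g₀) + g, maxᵢ (xᵢ + (-e⁽ⁱ⁾)))`, so it lies in every cone containing `g`
and the `-e⁽ⁱ⁾`.
-/

/-- A max-tropical cone in `𝕋_max^{d+1}` where `𝕋_max = ℝ ∪ {-∞}` is modeled by
`WithBot ℝ`: a nonempty set closed under coordinatewise max of translates. -/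
def IsMaxTropCone {d : ℕ} (C : Set (Fin (d + 1) → WithBot ℝ)) : Prop :=
  C.Nonempty ∧ ∀ (lam mu : WithBot ℝ), ∀ x ∈ C, ∀ y ∈ C,
    (fun k => max (lam + x k) (mu + y k)) ∈ C

def IsSmallestMaxTropConeContaining {d : ℕ} (C G : Set (Fin (d + 1) → WithBot ℝ)) : Prop :=
  IsMaxTropCone C ∧ G ⊆ C ∧ ∀ D, IsMaxTropCone D → G ⊆ D → C ⊆ D

open Finset

variable {d : ℕ}

def maxTropSector (g : Fin (d + 1) → WithBot ℝ) : Set (Fin (d + 1) → WithBot ℝ) :=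
  {x | ∀ j, j ≠ 0 → g j ≠ ⊥ → x 0 + g j ≤ x j + g 0}

def negUnitVec (i : Fin (d + 1)) : Fin (d + 1) → WithBot ℝ :=
  fun k => if k = i then 0 else ⊥

theorem WithBot.exists_add_eq {α : Type*} [AddGroup α] {a : WithBot α} (ha : a ≠ ⊥)
    (b : WithBot α) : ∃ c, c + a = b := by
  lift a to α using ha
  refine ⟨b + ↑(-a), ?_⟩
  rw [add_assoc, ← WithBot.coe_add, neg_add_cancel, WithBot.coe_zero, add_zero]

namespace IsMaxTropCone

variable {C : Set (Fin (d + 1) → WithBot ℝ)}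

theorem sup'_mem (hC : IsMaxTropCone C) {ι : Type*} {s : Finset ι} (hs : s.Nonempty)
    (c : ι → WithBot ℝ) {v : ι → Fin (d + 1) → WithBot ℝ} (hv : ∀ i ∈ s, v i ∈ C) :
    (fun k => s.sup' hs fun i => c i + v i k) ∈ C := by
  induction hs using Finset.Nonempty.cons_induction with
  | singleton i =>
    have hi := hv i (mem_singleton_self i)
    simpa using hC.2 (c i) (c i) _ hi _ hi
  | cons i s hi hs ih =>
    simp only [sup'_cons hs]
    simpa using hC.2 (c i) 0 _ (hv i (mem_cons_self i s)) _
      (ih fun j hj => hv j (mem_cons_of_mem hj))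

theorem mem_of_add_le (hC : IsMaxTropCone C) (he : ∀ i ≠ 0, negUnitVec i ∈ C)
    {g x : Fin (d + 1) → WithBot ℝ} (hg : g ∈ C) (c : WithBot ℝ)
    (hle : ∀ k, c + g k ≤ x k) (h0 : c + g 0 = x 0) : x ∈ C := by
  have hx : x = fun k => univ.sup' univ_nonempty fun i =>
      (if i = 0 then c else x i) + (if i = 0 then g else negUnitVec i) k := by
    funext k
    apply le_antisymm
    · refine le_sup'_of_le _ (mem_univ k) ?_
      by_cases hk : k = 0 <;> simp [hk, h0, negUnitVec]
    · refine sup'_le _ _ fun i _ => ?_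
      by_cases hi : i = 0
      · simp [hi, hle k]
      · by_cases hk : k = i <;> simp [negUnitVec, hi, hk]
  rw [hx]
  exact hC.sup'_mem _ _ fun i _ => by split_ifs with hi; exacts [hg, he i hi]

end IsMaxTropCone

theorem self_mem_maxTropSector (g : Fin (d + 1) → WithBot ℝ) : g ∈ maxTropSector g :=
  fun _ _ _ => (add_comm _ _).le

theorem mem_maxTropSector_of_apply_zero_eq_bot {g x : Fin (d + 1) → WithBot ℝ} (hx : x 0 = ⊥) :
    x ∈ maxTropSector g :=
  fun _ _ _ => by simp [hx]

theorem const_add_mem_maxTropSector {g x : Fin (d + 1) → WithBot ℝ} (hx : x ∈ maxTropSector g)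
    (c : WithBot ℝ) : (fun k => c + x k) ∈ maxTropSector g :=
  fun j hj hgj => by simpa only [add_assoc] using add_le_add_right (hx j hj hgj) c

theorem mem_maxTropSector_of_le {g x y : Fin (d + 1) → WithBot ℝ} (hx : x ∈ maxTropSector g)
    (hxy : x ≤ y) (h0 : x 0 = y 0) : y ∈ maxTropSector g :=
  fun j hj hgj => h0 ▸ (hx j hj hgj).trans (add_le_add_left (hxy j) _)

theorem max_mem_maxTropSector {g x y : Fin (d + 1) → WithBot ℝ} {lam mu : WithBot ℝ}
    (hx : x ∈ maxTropSector g) (h : mu + y 0 ≤ lam + x 0) :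
    (fun k => max (lam + x k) (mu + y k)) ∈ maxTropSector g :=
  mem_maxTropSector_of_le (const_add_mem_maxTropSector hx lam) (fun _ => le_max_left _ _)
    (max_eq_left h).symm

theorem add_le_of_mem_maxTropSector {g x : Fin (d + 1) → WithBot ℝ} (hx : x ∈ maxTropSector g)
    (hg : g 0 ≠ ⊥) {c : WithBot ℝ} (hc : c + g 0 = x 0) (k : Fin (d + 1)) : c + g k ≤ x k := by
  by_cases hk : k = 0
  · exact hk ▸ hc.le
  by_cases hgk : g k = ⊥
  · simp [hgk]
  rw [← WithBot.add_le_add_iff_right hg, add_right_comm, hc]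
  exact hx k hk hgk

theorem isMaxTropCone_biUnion_maxTropSector {G : Finset (Fin (d + 1) → WithBot ℝ)}
    (hG : G.Nonempty) : IsMaxTropCone (⋃ g ∈ G, maxTropSector g) := by
  refine ⟨?_, fun lam mu x hx y hy => ?_⟩
  · obtain ⟨g, hg⟩ := hG
    exact ⟨g, Set.mem_biUnion hg (self_mem_maxTropSector g)⟩
  obtain ⟨g, hg, hxg⟩ := Set.mem_iUnion₂.1 hx
  obtain ⟨h, hh, hyh⟩ := Set.mem_iUnion₂.1 hy
  rcases le_total (mu + y 0) (lam + x 0) with hle | hle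
  · exact Set.mem_biUnion hg (max_mem_maxTropSector hxg hle)
  · simp_rw [max_comm (lam + _)]
    exact Set.mem_biUnion hh (max_mem_maxTropSector hyh hle)

/-- For a finite nonempty `G ⊆ 𝕋_max^{d+1}` with `0 ∈ supp g` for all `g ∈ G`, the set
`𝒪(G) = ⋃_{g∈G} {x : x₀ - g₀ ≤ min (x_j - g_j : j ∈ supp(g)\{0})}` (the inequality
`x₀ - g₀ ≤ x_j - g_j` being expressed as `x₀ + g_j ≤ x_j + g₀` to avoid subtraction)
is a max-tropical cone; in fact it is the max-tropical cone generated by `G` together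
with the negated tropical unit vectors `-e⁽¹⁾, …, -e⁽ᵈ⁾`. -/
theorem monomialMaxTropCone_generated {d : ℕ} (G : Finset (Fin (d + 1) → WithBot ℝ))
    (hGne : G.Nonempty) (hG0 : ∀ g ∈ G, g 0 ≠ ⊥) :
    IsSmallestMaxTropConeContaining
      (⋃ g ∈ G, {x : Fin (d + 1) → WithBot ℝ |
        ∀ j, j ≠ 0 → g j ≠ ⊥ → x 0 + g j ≤ x j + g 0})
      ((G : Set (Fin (d + 1) → WithBot ℝ)) ∪
        Set.range (fun i : {i : Fin (d + 1) // i ≠ 0} =>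
          fun k => if k = (i : Fin (d + 1)) then (0 : WithBot ℝ) else ⊥)) := by
  refine ⟨isMaxTropCone_biUnion_maxTropSector hGne, ?_, ?_⟩
  · rintro x (hx | ⟨i, rfl⟩)
    · exact Set.mem_biUnion hx (self_mem_maxTropSector x)
    · obtain ⟨g, hg⟩ := hGne
      exact Set.mem_biUnion hg (mem_maxTropSector_of_apply_zero_eq_bot (if_neg (Ne.symm i.2)))
  · intro D hD hGD x hx
    obtain ⟨g, hg, hxg⟩ := Set.mem_iUnion₂.1 hx
    obtain ⟨c, hc⟩ := WithBot.exists_add_eq (hG0 g hg) (x 0)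
    exact hD.mem_of_add_le (fun i hi => hGD (Or.inr ⟨⟨i, hi⟩, rfl⟩)) (hGD (Or.inl hg)) c
      (add_le_of_mem_maxTropSector hxg (hG0 g hg) hc) hc
end

section
/- If x satisfies x₀ − g₀ ≤ min(x_j − g_j : j ∈ supp(g)\{0}) for a fixed g, then for any λ,μ ∈ 𝕋_max and any y with λ + x₀ ≥ μ + y₀, the max-tropical combination z with z_k = max(λ + x_k, μ + y_k) also satisfies z₀ − g₀ ≤ min(z_j − g_j : j ∈ supp(g)\{0}). -/
-- `x₀ + g_j ≤ x_j + g₀` is the subtraction-free form of `x₀ - g₀ ≤ x_j - g_j` in `WithBot ℝ`.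
theorem maxTropCombination_in_sector_general {d : ℕ} (g x y : Fin (d + 1) → WithBot ℝ)
    (hx : ∀ j, j ≠ 0 → g j ≠ ⊥ → x 0 + g j ≤ x j + g 0)
    (lam mu : WithBot ℝ) (h0 : mu + y 0 ≤ lam + x 0) :
    ∀ j, j ≠ 0 → g j ≠ ⊥ →
      (max (lam + x 0) (mu + y 0)) + g j ≤ (max (lam + x j) (mu + y j)) + g 0 := by
  intro j hj hgj
  rw [max_eq_left h0]
  calc lam + x 0 + g j ≤ lam + x j + g 0 := by
        simpa only [add_assoc] using add_le_add_right (hx j hj hgj) lam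
    _ ≤ max (lam + x j) (mu + y j) + g 0 := add_le_add_left (le_max_left _ _) _

/-- If `x` satisfies `x₀ - g₀ ≤ min (x_j - g_j : j ∈ supp(g)\{0})` (expressed as
`x₀ + g_j ≤ x_j + g₀` to avoid subtraction in `𝕋_max = WithBot ℝ`), then for any
`λ, μ ∈ 𝕋_max` and any `y` with `λ + x₀ ≥ μ + y₀`, the max-tropical combination
`z = (max (λ + x_k, μ + y_k))_k` satisfies the same inequality. -/
theorem maxTropCombination_in_sector {d : ℕ} (g x y : Fin (d + 1) → WithBot ℝ)
    (hg0 : g 0 ≠ ⊥)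
    (hx : ∀ j, j ≠ 0 → g j ≠ ⊥ → x 0 + g j ≤ x j + g 0)
    (lam mu : WithBot ℝ) (h0 : mu + y 0 ≤ lam + x 0) :
    ∀ j, j ≠ 0 → g j ≠ ⊥ →
      (max (lam + x 0) (mu + y 0)) + g j ≤ (max (lam + x j) (mu + y j)) + g 0 :=
  maxTropCombination_in_sector_general g x y hx lam mu h0
end
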